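/- There exists an absolute constant c > 0 such that, in the perturbation setup, if additionally m ε ≤ 1 then ‖M − M̄‖ ≤ c m ε Δ. -/

import Mathlib

open scoped RealInnerProductSpace
open ContinuousLinearMap

/-! The Krylov map `R v = ∑ vᵢ Sⁱ b` satisfies `R v = v₀ b + S R (tail v)`, so by induction on `m`
`‖(R - R̄) v‖ ≤ ε ∑ |vᵢ| + m ε ‖R‖ ‖v‖`, whence `‖R - R̄‖ ≤ √m ε + m ε ‖R‖ ≤ 2 m ε √Δ` because
`‖R‖² = ‖R* R‖ ≤ Δ` and `m Δ ≥ 1`. Then `M - M̄ = R* (S - S̄) R + R* S̄ (R - R̄) + (R - R̄)* S̄ R̄`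
gives `‖M - M̄‖ ≤ (1 + 8 m) ε Δ ≤ 9 m ε Δ`. -/

theorem EuclideanSpace.norm_sq_eq_sq_add_norm_tail_sq {n : ℕ}
    (v : EuclideanSpace ℝ (Fin (n + 1))) :
    ‖v‖ ^ 2 = v 0 ^ 2 + ‖WithLp.toLp 2 (Fin.tail v)‖ ^ 2 := by
  simp [EuclideanSpace.norm_sq_eq, Fin.sum_univ_succ, Fin.tail]

theorem EuclideanSpace.norm_snoc_zero {n : ℕ} (w : EuclideanSpace ℝ (Fin n)) :
    ‖(WithLp.toLp 2 (Fin.snoc w 0) : EuclideanSpace ℝ (Fin (n + 1)))‖ = ‖w‖ := by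
  simp [EuclideanSpace.norm_eq, Fin.sum_univ_castSucc]

theorem EuclideanSpace.sum_abs_le_sqrt_card_mul_norm {n : ℕ} (v : EuclideanSpace ℝ (Fin n)) :
    ∑ i, |v i| ≤ √n * ‖v‖ := by
  simpa [EuclideanSpace.norm_eq] using
    Real.sum_mul_le_sqrt_mul_sqrt Finset.univ (fun _ ↦ 1) (fun i ↦ |v i|)

section Krylov

variable {H : Type*} [NormedAddCommGroup H] [NormedSpace ℝ H]

def krylov (S : H →L[ℝ] H) (b : H) (n : ℕ) (v : EuclideanSpace ℝ (Fin n)) : H :=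
  ∑ i, v i • (S ^ (i : ℕ)) b

theorem krylov_succ (S : H →L[ℝ] H) (b : H) {n : ℕ} (v : EuclideanSpace ℝ (Fin (n + 1))) :
    krylov S b (n + 1) v = v 0 • b + S (krylov S b n (WithLp.toLp 2 (Fin.tail v))) := by
  simp only [krylov, Fin.sum_univ_succ, map_sum, map_smul, Fin.tail, Fin.val_succ, Fin.val_zero,
    pow_succ', pow_zero]
  rfl

theorem krylov_snoc_zero (S : H →L[ℝ] H) (b : H) {n : ℕ} (w : EuclideanSpace ℝ (Fin n)) :
    krylov S b (n + 1) (WithLp.toLp 2 (Fin.snoc w 0)) = krylov S b n w := by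
  simp [krylov, Fin.sum_univ_castSucc]

theorem norm_krylov_sub_krylov_le {S S' : H →L[ℝ] H} {b b' : H} {ε C : ℝ} (hS' : ‖S'‖ ≤ 1)
    (hSS : ‖S - S'‖ ≤ ε) (hbb : ‖b - b'‖ ≤ ε) (hC : 0 ≤ C) :
    ∀ n, (∀ w, ‖krylov S b n w‖ ≤ C * ‖w‖) → ∀ v,
      ‖krylov S b n v - krylov S' b' n v‖ ≤ ε * ∑ i, |v i| + n * ε * C * ‖v‖
  | 0, _, v => by simp [krylov]
  | n + 1, hK, v => by
    have hε : 0 ≤ ε := (norm_nonneg _).trans hbb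
    set t : EuclideanSpace ℝ (Fin n) := WithLp.toLp 2 (Fin.tail v)
    have ht : ‖t‖ ≤ ‖v‖ := by
      have := EuclideanSpace.norm_sq_eq_sq_add_norm_tail_sq v
      nlinarith [sq_nonneg (v 0), norm_nonneg t, norm_nonneg v]
    have hKt : ∀ w, ‖krylov S b n w‖ ≤ C * ‖w‖ := fun w ↦ by
      simpa only [krylov_snoc_zero, EuclideanSpace.norm_snoc_zero] using
        hK (WithLp.toLp 2 (Fin.snoc w 0))
    have ih := norm_krylov_sub_krylov_le hS' hSS hbb hC n hKt t
    have hsplit : krylov S b (n + 1) v - krylov S' b' (n + 1) v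
        = v 0 • (b - b') + (S - S') (krylov S b n t) + S' (krylov S b n t - krylov S' b' n t) := by
      rw [krylov_succ, krylov_succ, smul_sub, sub_apply, map_sub]
      abel
    have hsum : ∑ i, |v i| = |v 0| + ∑ i, |t i| := Fin.sum_univ_succ _
    calc ‖krylov S b (n + 1) v - krylov S' b' (n + 1) v‖
        ≤ |v 0| * ε + ε * (C * ‖t‖) + (ε * ∑ i, |t i| + n * ε * C * ‖t‖) := by
          rw [hsplit]
          refine norm_add₃_le.trans (add_le_add_three ?_ ?_ ?_)
          · rw [norm_smul, Real.norm_eq_abs]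
            exact mul_le_mul_of_nonneg_left hbb (abs_nonneg _)
          · exact le_of_opNorm_le_of_le _ hSS (hKt t)
          · exact (le_of_opNorm_le_of_le _ hS' ih).trans_eq (one_mul _)
      _ ≤ ε * ∑ i, |v i| + (n + 1 : ℕ) * ε * C * ‖v‖ := by
          rw [hsum]
          push_cast
          linarith [mul_le_mul_of_nonneg_left ht (by positivity : 0 ≤ (n + 1) * ε * C)]

theorem norm_sub_le_of_eq_krylov {S S' : H →L[ℝ] H} {b b' : H} {ε : ℝ} {m : ℕ}
    {R R' : EuclideanSpace ℝ (Fin m) →L[ℝ] H}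
    (hS' : ‖S'‖ ≤ 1) (hSS : ‖S - S'‖ ≤ ε) (hbb : ‖b - b'‖ ≤ ε)
    (hR : ∀ v, R v = krylov S b m v) (hR' : ∀ v, R' v = krylov S' b' m v) :
    ‖R - R'‖ ≤ √m * ε + m * ε * ‖R‖ := by
  have hε : 0 ≤ ε := (norm_nonneg _).trans hbb
  refine opNorm_le_bound _ (by positivity) fun v ↦ ?_
  have hK : ∀ w, ‖krylov S b m w‖ ≤ ‖R‖ * ‖w‖ := fun w ↦ hR w ▸ R.le_opNorm w
  calc ‖(R - R') v‖ ≤ ε * ∑ i, |v i| + m * ε * ‖R‖ * ‖v‖ := by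
        rw [sub_apply, hR, hR']
        exact norm_krylov_sub_krylov_le hS' hSS hbb (norm_nonneg R) m hK v
    _ ≤ ε * (√m * ‖v‖) + m * ε * ‖R‖ * ‖v‖ := by
        gcongr; exact EuclideanSpace.sum_abs_le_sqrt_card_mul_norm v
    _ = (√m * ε + m * ε * ‖R‖) * ‖v‖ := by ring

end Krylov

theorem norm_adjoint_comp_comp_sub_le {𝕜 E F : Type*} [RCLike 𝕜] [NormedAddCommGroup E]
    [InnerProductSpace 𝕜 E] [CompleteSpace E] [NormedAddCommGroup F] [InnerProductSpace 𝕜 F]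
    [CompleteSpace F] (A B : E →L[𝕜] F) (T T' : F →L[𝕜] F) :
    ‖adjoint A ∘L (T ∘L A) - adjoint B ∘L (T' ∘L B)‖
      ≤ ‖A‖ ^ 2 * ‖T - T'‖ + ‖T'‖ * ‖A - B‖ * (‖A‖ + ‖B‖) := by
  have hsplit : adjoint A ∘L (T ∘L A) - adjoint B ∘L (T' ∘L B)
      = adjoint A ∘L ((T - T') ∘L A) + adjoint A ∘L (T' ∘L (A - B))
        + adjoint (A - B) ∘L (T' ∘L B) := by
    ext x
    simp only [comp_apply, sub_apply, add_apply, map_sub]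
    abel
  have hAB : ‖adjoint (A - B)‖ = ‖A - B‖ := adjoint.norm_map _
  have hA : ‖adjoint A‖ = ‖A‖ := adjoint.norm_map _
  calc _ ≤ ‖adjoint A‖ * (‖T - T'‖ * ‖A‖) + ‖adjoint A‖ * (‖T'‖ * ‖A - B‖)
        + ‖adjoint (A - B)‖ * (‖T'‖ * ‖B‖) := by
        rw [hsplit]
        refine norm_add₃_le.trans (add_le_add_three ?_ ?_ ?_) <;>
          exact (opNorm_comp_le _ _).trans (by gcongr; exact opNorm_comp_le _ _)
    _ = _ := by rw [hA, hAB]; ring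

theorem Real.sqrt_le_mul_sqrt_of_one_le_mul {m Δ : ℝ} (hm : 0 ≤ m) (hmΔ : 1 ≤ m * Δ) :
    √m ≤ m * √Δ := by
  calc √m = √m * 1 := (mul_one _).symm
    _ ≤ √m * √(m * Δ) := by gcongr; exact Real.one_le_sqrt.2 hmΔ
    _ = m * √Δ := by rw [Real.sqrt_mul hm, ← mul_assoc, Real.mul_self_sqrt hm]

/-- There is an absolute constant `c > 0` such that, in the perturbation setup, if `m ε ≤ 1`
then `‖M − M̄‖ ≤ c m ε Δ`, where `M = R* S R`, `M̄ = R̄* S̄ R̄` and `Δ = max(‖R* R‖, 1/m)`. -/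
theorem stmt14 :
    ∃ c : ℝ, 0 < c ∧
      ∀ (H : Type) (_ : NormedAddCommGroup H) (_ : InnerProductSpace ℝ H) (_ : CompleteSpace H)
        (S S' : H →L[ℝ] H),
        IsSelfAdjoint S → IsSelfAdjoint S' →
        (∀ x, 0 ≤ ⟪S x, x⟫) → (∀ x, 0 ≤ ⟪S' x, x⟫) → ‖S‖ ≤ 1 → ‖S'‖ ≤ 1 →
        ∀ (b b' : H) (ε : ℝ), 0 < ε → ‖S - S'‖ ≤ ε → ‖b - b'‖ ≤ ε →
        ∀ m : ℕ, 1 ≤ m →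
        ∀ (R R' : EuclideanSpace ℝ (Fin m) →L[ℝ] H),
          (∀ v, R v = ∑ i : Fin m, v i • (S ^ (i : ℕ)) b) →
          (∀ v, R' v = ∑ i : Fin m, v i • (S' ^ (i : ℕ)) b') →
          (m : ℝ) * ε ≤ 1 →
          ‖((adjoint R) ∘L (S ∘L R)) - ((adjoint R') ∘L (S' ∘L R'))‖
            ≤ c * m * ε * max ‖(adjoint R) ∘L R‖ (1 / (m : ℝ)) := by
  refine ⟨9, by norm_num, ?_⟩
  intro H _ _ _ S S' _ _ _ _ _ hS' b b' ε _ hSS hbb m hm R R' hR hR' hmε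
  set Δ := max ‖adjoint R ∘L R‖ (1 / (m : ℝ))
  have hm0 : (0 : ℝ) < m := by exact_mod_cast hm
  have hRΔ : ‖R‖ ≤ √Δ := Real.le_sqrt_of_sq_le <| by
    rw [sq, ← norm_adjoint_comp_self]; exact le_max_left _ _
  have hmΔ : 1 ≤ m * Δ := by
    rw [← div_le_iff₀' hm0]; exact le_max_right _ _
  have hRR' : ‖R - R'‖ ≤ 2 * (m * ε) * √Δ := by
    calc ‖R - R'‖ ≤ √m * ε + m * ε * ‖R‖ := norm_sub_le_of_eq_krylov hS' hSS hbb hR hR'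
      _ ≤ m * √Δ * ε + m * ε * √Δ := by
          gcongr; exact Real.sqrt_le_mul_sqrt_of_one_le_mul hm0.le hmΔ
      _ = 2 * (m * ε) * √Δ := by ring
  have hR'Δ : ‖R'‖ ≤ 3 * √Δ := by
    calc ‖R'‖ ≤ ‖R‖ + ‖R - R'‖ := norm_le_insert _ _
      _ ≤ √Δ + 2 * 1 * √Δ := add_le_add hRΔ (hRR'.trans (by gcongr))
      _ = 3 * √Δ := by ring
  calc _ ≤ ‖R‖ ^ 2 * ‖S - S'‖ + ‖S'‖ * ‖R - R'‖ * (‖R‖ + ‖R'‖) :=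
        norm_adjoint_comp_comp_sub_le R R' S S'
    _ ≤ √Δ ^ 2 * ε + 1 * (2 * (m * ε) * √Δ) * (√Δ + 3 * √Δ) := by gcongr
    _ = (1 + 8 * m) * ε * √Δ ^ 2 := by ring
    _ ≤ 9 * m * ε * Δ := by
        rw [Real.sq_sqrt (by positivity)]; gcongr; linarith [(Nat.one_le_cast (α := ℝ)).2 hm]
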